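/- Let U_1, U_2, …, U_m be pairwise non-isomorphic finite nonabelian simple groups and let e_1, …, e_m be natural numbers. Then μ(U_1^{e_1} × U_2^{e_2} × ⋯ × U_m^{e_m}) = μ(U_1^{e_1}) · μ(U_2^{e_2}) ⋯ μ(U_m^{e_m}). -/

import Mathlib

/-!
Rota's Galois connection theorem, applied to `H ↦ (π₁ H, π₂ H)` from the subgroup lattice of
`A × B` to the product of the subgroup lattices of `A` and `B`, gives `μ(A × B) = μ(A) μ(B)` as
soon as `A × B` is the only subgroup of `A × B` projecting onto both factors. By Goursat's lemma
any other such subgroup identifies a nontrivial quotient of `A` with a quotient of `B`, and so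
yields a simple group that is a quotient of both. A simple quotient of a product of powers of
simple groups `U i` is isomorphic to one of the `U i`, so for `A = U 0 ^ e 0` and
`B = ∏ i > 0, U i ^ e i` this is excluded by the non-isomorphism hypothesis; induct on `m`.
-/

open Finset

/-- The Möbius function of the subgroup lattice of a finite group `G`,
evaluated at a pair of subgroups. -/
noncomputable def subgroupMu (G : Type*) [Group G] [Finite G] (H K : Subgroup G) : ℤ :=
  letI : Fintype (Subgroup G) := Fintype.ofFinite _
  letI : DecidableEq (Subgroup G) := Classical.decEq _
  letI : DecidableRel (α := Subgroup G) (· < ·) := Classical.decRel _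
  letI : DecidableRel (α := Subgroup G) (· ≤ ·) := Classical.decRel _
  letI := Fintype.toLocallyFiniteOrder (α := Subgroup G)
  IncidenceAlgebra.mu ℤ H K

/-- The Möbius number of a finite group `G`: the value `μ(⊥, ⊤)` of the Möbius
function of its lattice of subgroups. -/
noncomputable def muGrp (G : Type*) [Group G] [Finite G] : ℤ :=
  subgroupMu G ⊥ ⊤

open IncidenceAlgebra

universe u

/-- Rota's Galois connection theorem, in the case of the bottom element. -/
theorem GaloisConnection.sum_mu_bot_fiber_eq_mu_bot {𝕜 α β : Type*} [Ring 𝕜]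
    [PartialOrder α] [OrderBot α] [Fintype α] [LocallyFiniteOrder α] [DecidableEq α]
    [PartialOrder β] [OrderBot β] [LocallyFiniteOrder β] [DecidableEq β]
    {f : α → β} {g : β → α} (gc : GaloisConnection f g) (hf : Function.Surjective f)
    (hbot : ∀ x, f x = ⊥ → x = ⊥) (b : β) :
    ∑ x with f x = b, mu 𝕜 ⊥ x = mu 𝕜 ⊥ b := by
  have hg (c : β) : ⊥ = g c ↔ ⊥ = c := by
    constructor
    · intro hc
      obtain ⟨x, rfl⟩ := hf c
      have hx : x ≤ ⊥ := hc ▸ gc.le_u_l x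
      rw [le_bot_iff.1 hx, gc.l_bot]
    · rintro rfl
      exact (hbot _ (le_bot_iff.1 (gc.l_u_le ⊥))).symm
  have hsum (c : β) :
      (if ⊥ = c then 1 else 0 : 𝕜) = ∑ b' ∈ Iic c, ∑ x with f x = b', mu 𝕜 ⊥ x := by
    calc (if ⊥ = c then 1 else 0 : 𝕜)
        = ∑ x ∈ Iic (g c), mu 𝕜 ⊥ x := by
          rw [Iic_eq_Icc, sum_Icc_mu_right, if_congr (hg c) rfl rfl]
      _ = ∑ b' ∈ Iic c, ∑ x ∈ Iic (g c) with f x = b', mu 𝕜 ⊥ x :=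
        (sum_fiberwise_of_maps_to (fun x hx => mem_Iic.2 (gc.l_le (mem_Iic.1 hx))) _).symm
      _ = ∑ b' ∈ Iic c, ∑ x with f x = b', mu 𝕜 ⊥ x := by
        refine sum_congr rfl fun b' hb' => ?_
        congr 1
        ext x
        simp only [mem_filter, mem_Iic, mem_univ, true_and, and_iff_right_iff_imp, ← gc x c]
        exact fun h => h ▸ mem_Iic.1 hb'
  rw [moebius_inversion_bot _ _ hsum b]
  simp

theorem OrderIso.eulerChar_eq {𝕜 α β : Type*} [Ring 𝕜]
    [PartialOrder α] [BoundedOrder α] [Fintype α] [LocallyFiniteOrder α] [DecidableEq α]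
    [PartialOrder β] [BoundedOrder β] [LocallyFiniteOrder β] [DecidableEq β] (e : α ≃o β) :
    eulerChar 𝕜 α = eulerChar 𝕜 β := by
  have h := e.to_galoisConnection.sum_mu_bot_fiber_eq_mu_bot (𝕜 := 𝕜) e.surjective
    (fun _ => (map_eq_bot_iff e).1) ⊤
  simpa [eulerChar, filter_eq'] using h

section Subgroups

attribute [local instance] Fintype.ofFinite

variable {G G' : Type*} [Group G] [Group G'] [Finite G] [Finite G']

theorem muGrp_eq_eulerChar [LocallyFiniteOrder (Subgroup G)] [DecidableEq (Subgroup G)] :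
    muGrp G = eulerChar ℤ (Subgroup G) := by
  unfold muGrp subgroupMu eulerChar
  congr!
  exact Subsingleton.elim _ _

theorem muGrp_of_subsingleton [Subsingleton G] : muGrp G = 1 := by
  classical
  let := Fintype.toLocallyFiniteOrder (α := Subgroup G)
  rw [muGrp_eq_eulerChar, eulerChar, Subsingleton.elim (⊤ : Subgroup G) ⊥, mu_self]

theorem muGrp_congr (e : G ≃* G') : muGrp G = muGrp G' := by
  classical
  let := Fintype.toLocallyFiniteOrder (α := Subgroup G)
  let := Fintype.toLocallyFiniteOrder (α := Subgroup G')
  rw [muGrp_eq_eulerChar, muGrp_eq_eulerChar, e.mapSubgroup.eulerChar_eq]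

theorem muGrp_prod_of_forall_map_eq_top {A B : Type*} [Group A] [Group B] [Finite A] [Finite B]
    (h : ∀ I : Subgroup (A × B),
      I.map (MonoidHom.fst A B) = ⊤ → I.map (MonoidHom.snd A B) = ⊤ → I = ⊤) :
    muGrp (A × B) = muGrp A * muGrp B := by
  classical
  let := Fintype.toLocallyFiniteOrder (α := Subgroup A)
  let := Fintype.toLocallyFiniteOrder (α := Subgroup B)
  let := Fintype.toLocallyFiniteOrder (α := Subgroup (A × B))
  let f (I : Subgroup (A × B)) : Subgroup A × Subgroup B :=
    (I.map (MonoidHom.fst A B), I.map (MonoidHom.snd A B))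
  have gc : GaloisConnection f fun K => K.1.prod K.2 := fun _ _ => Subgroup.le_prod_iff.symm
  have hf : Function.Surjective f := fun K => ⟨K.1.prod K.2, by
    ext <;> simp [f, Subgroup.mem_map, Subgroup.mem_prod] <;> exact fun _ => ⟨1, one_mem _⟩⟩
  have hbot (I : Subgroup (A × B)) (hI : f I = ⊥) : I = ⊥ := by
    rw [eq_bot_iff, ← Subgroup.bot_prod_bot]
    exact gc.le_u (le_of_eq hI)
  have hfiber (I : Subgroup (A × B)) : f I = ⊤ ↔ I = ⊤ :=
    ⟨fun hI => h I (congrArg Prod.fst hI) (congrArg Prod.snd hI), fun hI => hI ▸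
      Prod.ext (Subgroup.map_top_of_surjective _ Prod.fst_surjective)
        (Subgroup.map_top_of_surjective _ Prod.snd_surjective)⟩
  have key := gc.sum_mu_bot_fiber_eq_mu_bot (𝕜 := ℤ) hf hbot ⊤
  simp only [hfiber, sum_filter, sum_ite_eq', mem_univ, if_true] at key
  rw [muGrp_eq_eulerChar, muGrp_eq_eulerChar, muGrp_eq_eulerChar, ← eulerChar_prod, eulerChar,
    eulerChar]
  exact key

end Subgroups

theorem exists_surjective_isSimpleGroup (G : Type u) [Group G] [Finite G] [Nontrivial G] :
    ∃ (S : Type u) (_ : Group S), IsSimpleGroup S ∧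
      ∃ f : G →* S, Function.Surjective f := by
  induction hn : Nat.card G using Nat.strong_induction_on generalizing G with
  | _ n ih =>
  by_cases hG : IsSimpleGroup G
  · exact ⟨G, _, hG, MonoidHom.id G, Function.surjective_id⟩
  obtain ⟨N, hN, hbot, htop⟩ : ∃ N : Subgroup G, N.Normal ∧ N ≠ ⊥ ∧ N ≠ ⊤ := by
    simpa [isSimpleGroup_iff, not_or, ‹Nontrivial G›] using hG
  have : Nontrivial (G ⧸ N) := by
    rwa [← not_subsingleton_iff_nontrivial, QuotientGroup.subsingleton_iff]
  have hlt : Nat.card (G ⧸ N) < n := by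
    rw [← hn, ← N.card_mul_index, Subgroup.index]
    exact lt_mul_of_one_lt_left Nat.card_pos ((N.one_lt_card_iff_ne_bot).2 hbot)
  obtain ⟨S, _, hS, f, hf⟩ := ih _ hlt (G ⧸ N) rfl
  exact ⟨S, _, hS, f.comp (QuotientGroup.mk' N), hf.comp (QuotientGroup.mk'_surjective N)⟩

theorem MonoidHom.normal_range_mulSingle {ι : Type*} [DecidableEq ι] (V : ι → Type*)
    [∀ i, Group (V i)] (i : ι) : (MonoidHom.mulSingle V i).range.Normal := by
  refine ⟨fun _ ⟨x, hx⟩ g => ⟨g i * x * (g i)⁻¹, ?_⟩⟩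
  subst hx
  funext j
  rcases eq_or_ne j i with rfl | hji <;> simp [*]

theorem MonoidHom.exists_surjective_comp_mulSingle {ι : Type*} [Finite ι] [DecidableEq ι]
    {V : ι → Type*} [∀ i, Group (V i)] {S : Type*} [Group S] [IsSimpleGroup S]
    (φ : (∀ i, V i) →* S) (hφ : Function.Surjective φ) :
    ∃ i, Function.Surjective (φ.comp (MonoidHom.mulSingle V i)) := by
  by_contra! h
  have hcomp : ∀ i, φ.comp (MonoidHom.mulSingle V i) = 1 := fun i => by
    have hn : (φ.comp (MonoidHom.mulSingle V i)).range.Normal := by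
      rw [MonoidHom.range_comp]
      exact (normal_range_mulSingle V i).map φ hφ
    rcases hn.eq_bot_or_eq_top with hbot | htop
    · exact MonoidHom.range_eq_bot_iff.1 hbot
    · exact absurd (MonoidHom.range_eq_top.1 htop) (h i)
  have hφ1 : φ = 1 := MonoidHom.pi_ext fun i x => DFunLike.congr_fun (hcomp i) x
  obtain ⟨s, hs⟩ := exists_ne (1 : S)
  obtain ⟨g, rfl⟩ := hφ s
  exact hs (by simp [hφ1])

theorem MonoidHom.injective_of_isSimpleGroup {G H : Type*} [Group G] [Group H] [IsSimpleGroup G]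
    [Nontrivial H] (f : G →* H) (hf : Function.Surjective f) : Function.Injective f := by
  rw [← MonoidHom.ker_eq_bot_iff]
  refine (f.normal_ker.eq_bot_or_eq_top).resolve_right fun htop => ?_
  obtain ⟨h, hh⟩ := exists_ne (1 : H)
  obtain ⟨g, rfl⟩ := hf h
  exact hh (f.mem_ker.1 (htop ▸ Subgroup.mem_top g))

theorem nonempty_mulEquiv_of_surjective_pi {κ U S : Type*} [Finite κ] [Group U] [Group S]
    [IsSimpleGroup U] [IsSimpleGroup S] (φ : (κ → U) →* S) (hφ : Function.Surjective φ) :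
    Nonempty (U ≃* S) := by
  classical
  obtain ⟨k, hk⟩ := φ.exists_surjective_comp_mulSingle hφ
  exact ⟨MulEquiv.ofBijective _ ⟨MonoidHom.injective_of_isSimpleGroup _ hk, hk⟩⟩

theorem exists_mulEquiv_of_surjective_pi_pi {ι : Type*} [Finite ι] {κ : ι → Type*}
    [∀ i, Finite (κ i)] {U : ι → Type*} [∀ i, Group (U i)] [∀ i, IsSimpleGroup (U i)]
    {S : Type*} [Group S] [IsSimpleGroup S] (φ : (∀ i, κ i → U i) →* S)
    (hφ : Function.Surjective φ) : ∃ i, Nonempty (U i ≃* S) := by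
  classical
  obtain ⟨i, hi⟩ := φ.exists_surjective_comp_mulSingle hφ
  exact ⟨i, nonempty_mulEquiv_of_surjective_pi _ hi⟩

theorem Subgroup.eq_top_of_map_fst_eq_top_of_map_snd_eq_top {G : Type u} {H : Type*} [Group G]
    [Group H] [Finite G]
    (hGH : ∀ (S : Type u) [Group S] [IsSimpleGroup S] (f : G →* S) (g : H →* S),
      Function.Surjective f → Function.Surjective g → False)
    {I : Subgroup (G × H)} (h₁ : I.map (MonoidHom.fst G H) = ⊤)
    (h₂ : I.map (MonoidHom.snd G H) = ⊤) : I = ⊤ := by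
  have hI₁ : Function.Surjective (Prod.fst ∘ I.subtype) := by
    rw [← MonoidHom.coe_fst, ← MonoidHom.coe_comp, ← MonoidHom.range_eq_top,
      MonoidHom.range_comp, Subgroup.range_subtype, h₁]
  have hI₂ : Function.Surjective (Prod.snd ∘ I.subtype) := by
    rw [← MonoidHom.coe_snd, ← MonoidHom.coe_comp, ← MonoidHom.range_eq_top,
      MonoidHom.range_comp, Subgroup.range_subtype, h₂]
  have := normal_goursatFst hI₁
  have := normal_goursatSnd hI₂
  obtain ⟨e, -⟩ := goursat_surjective hI₁ hI₂
  have hFst : I.goursatFst = ⊤ := by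
    by_contra hne
    have : Nontrivial (G ⧸ I.goursatFst) := by
      rwa [← not_subsingleton_iff_nontrivial, QuotientGroup.subsingleton_iff]
    obtain ⟨S, _, _, f, hf⟩ := exists_surjective_isSimpleGroup (G ⧸ I.goursatFst)
    exact hGH S (f.comp (QuotientGroup.mk' _))
      (f.comp (e.symm.toMonoidHom.comp (QuotientGroup.mk' _)))
      (hf.comp (QuotientGroup.mk'_surjective _))
      (hf.comp (e.symm.surjective.comp (QuotientGroup.mk'_surjective _)))
  have hSnd : I.goursatSnd = ⊤ := by
    have := QuotientGroup.subsingleton_iff.2 hFst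
    exact QuotientGroup.subsingleton_iff.1 e.symm.toEquiv.subsingleton
  rw [eq_top_iff, ← top_prod_top, ← hFst, ← hSnd]
  exact I.goursatFst_prod_goursatSnd_le

def MulEquiv.piFinSucc {n : ℕ} (G : Fin (n + 1) → Type*) [∀ i, Group (G i)] :
    G 0 × (∀ i : Fin n, G i.succ) ≃* ∀ i, G i :=
  { Fin.consEquiv G with
    map_mul' := fun _ _ => funext fun i => Fin.cases rfl (fun _ => rfl) i }

theorem muGrp_prod_powers_of_simple_general
    {m : ℕ} (e : Fin m → ℕ) (U : Fin m → Type*) [∀ i, Group (U i)] [∀ i, Finite (U i)]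
    (hsimple : ∀ i, IsSimpleGroup (U i))
    (hnoniso : ∀ i j, i ≠ j → IsEmpty (U i ≃* U j)) :
    muGrp (∀ i : Fin m, Fin (e i) → U i) = ∏ i, muGrp (Fin (e i) → U i) := by
  induction m with
  | zero => rw [muGrp_of_subsingleton, Fin.prod_univ_zero]
  | succ n ih =>
    rw [← muGrp_congr (MulEquiv.piFinSucc fun i => Fin (e i) → U i),
      muGrp_prod_of_forall_map_eq_top, Fin.prod_univ_succ,
      ih _ _ (fun i => hsimple i.succ) fun i j hij => hnoniso _ _ ((Fin.succ_injective _).ne hij)]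
    intro I h₁ h₂
    refine I.eq_top_of_map_fst_eq_top_of_map_snd_eq_top (fun S _ _ f g hf hg => ?_) h₁ h₂
    have := hsimple
    obtain ⟨e₀⟩ := nonempty_mulEquiv_of_surjective_pi f hf
    obtain ⟨i, ⟨eᵢ⟩⟩ := exists_mulEquiv_of_surjective_pi_pi g hg
    exact (hnoniso 0 i.succ (Fin.succ_ne_zero i).symm).false (e₀.trans eᵢ.symm)

/-- The Möbius number of a product of powers of pairwise non-isomorphic
nonabelian simple groups is the product of the Möbius numbers of the powers. -/
theorem muGrp_prod_powers_of_simple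
    {m : ℕ} (e : Fin m → ℕ) (U : Fin m → Type*) [∀ i, Group (U i)] [∀ i, Finite (U i)]
    (hsimple : ∀ i, IsSimpleGroup (U i))
    (hnonab : ∀ i, ¬ ∀ a b : U i, a * b = b * a)
    (hnoniso : ∀ i j, i ≠ j → IsEmpty (U i ≃* U j)) :
    muGrp (∀ i : Fin m, Fin (e i) → U i) = ∏ i, muGrp (Fin (e i) → U i) :=
  muGrp_prod_powers_of_simple_general e U hsimple hnoniso
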